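/- The function $D(z_1, z_2) = \frac{2\sin(\theta/2)}{\max\{\log(1/|z_1|), \log(1/|z_2|)\}} + \left|\log\log\frac{1}{|z_2|} - \log\log\frac{1}{|z_1|}\right|$, where $\theta = |\arg(z_2/z_1)| \in [0,\pi]$, defines a distance function (metric) on the punctured closed disk $E^* = \{z \in \mathbb{C} : 0 < |z| \leq e^{-1}\}$: it is symmetric, nonnegative, vanishes exactly on the diagonal, and satisfies the triangle inequality. -/

import Mathlib

open Complex

/-- The distance function `D` on the punctured disk `0 < |z| ≤ e⁻¹`. -/
noncomputable def D (z₁ z₂ : ℂ) : ℝ :=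
  2 * Real.sin (|Complex.arg (z₂ / z₁)| / 2) /
      max (Real.log (1 / ‖z₁‖)) (Real.log (1 / ‖z₂‖)) +
    |Real.log (Real.log (1 / ‖z₂‖)) - Real.log (Real.log (1 / ‖z₁‖))|

/-!
Write `z = e^{-L} u` with `|u| = 1` and `L = log (1/|z|) ≥ 1`. Then `D` is the function
`d((u, s), (v, t)) = |u - v| / max s t + |log t - log s|`, which makes sense on `X × [1, ∞)`
for any metric space `X` of diameter at most `2`. Its triangle inequality through a third
point `(w, r)` is immediate from monotonicity of `1 / max` unless `r > M := max s t`. In that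
case the logarithmic part gains exactly `2 (log r - log M)`, while replacing the denominator
`M` by `r` costs at most `|u - v| (1/M - 1/r) ≤ 2 (1/M - 1/r) ≤ 2 (log r - log M)`.
-/

namespace Real

lemma inv_sub_inv_le_log_sub_log {M L : ℝ} (hM : 1 ≤ M) (hML : M ≤ L) :
    M⁻¹ - L⁻¹ ≤ log L - log M := by
  have hL : 0 < L := by linarith
  calc M⁻¹ - L⁻¹ = (1 - M / L) / M := by field_simp
    _ ≤ 1 - M / L := div_le_self (by rw [sub_nonneg, div_le_one hL]; exact hML) hM
    _ = 1 - (L / M)⁻¹ := by rw [inv_div]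
    _ ≤ log (L / M) := one_sub_inv_le_log_of_pos (by positivity)
    _ = log L - log M := log_div hL.ne' (by positivity)

lemma abs_log_sub_add_two_mul_log_sub_log_max {s t r : ℝ} (hs : 0 < s) (ht : 0 < t)
    (hr : max s t ≤ r) :
    |log t - log s| + 2 * (log r - log (max s t)) = |log r - log s| + |log t - log r| := by
  have hsr : log s ≤ log r := log_le_log hs (le_of_max_le_left hr)
  have htr : log t ≤ log r := log_le_log ht (le_of_max_le_right hr)
  rw [abs_of_nonneg (sub_nonneg.mpr hsr), abs_of_nonpos (sub_nonpos.mpr htr)]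
  rcases le_total s t with hst | hts
  · rw [max_eq_right hst, abs_of_nonneg (sub_nonneg.mpr (log_le_log hs hst))]
    ring
  · rw [max_eq_left hts, abs_of_nonpos (sub_nonpos.mpr (log_le_log ht hts))]
    ring

end Real

section PolarDist

variable {X : Type*}

noncomputable def polarDist [PseudoMetricSpace X] (p q : X × ℝ) : ℝ :=
  dist p.1 q.1 / max p.2 q.2 + |Real.log q.2 - Real.log p.2|

lemma polarDist_comm [PseudoMetricSpace X] (p q : X × ℝ) : polarDist p q = polarDist q p := by
  rw [polarDist, polarDist, dist_comm, max_comm, abs_sub_comm]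

lemma polarDist_nonneg [PseudoMetricSpace X] {p q : X × ℝ} (hp : 0 ≤ p.2) :
    0 ≤ polarDist p q :=
  add_nonneg (div_nonneg dist_nonneg (le_max_of_le_left hp)) (abs_nonneg _)

lemma polarDist_eq_zero_iff [MetricSpace X] {p q : X × ℝ} (hp : 0 < p.2) (hq : 0 < q.2) :
    polarDist p q = 0 ↔ p = q := by
  constructor
  · intro h
    obtain ⟨hdist, hlog⟩ := (add_eq_zero_iff_of_nonneg
      (div_nonneg dist_nonneg (le_max_of_le_left hp.le)) (abs_nonneg _)).mp h
    have h₁ : p.1 = q.1 := dist_eq_zero.mp <|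
      (div_eq_zero_iff.mp hdist).resolve_right (lt_max_of_lt_left hp).ne'
    have h₂ : p.2 = q.2 :=
      (Real.log_injOn_pos (Set.mem_Ioi.mpr hq) (Set.mem_Ioi.mpr hp)
        (sub_eq_zero.mp (abs_eq_zero.mp hlog))).symm
    exact Prod.ext h₁ h₂
  · rintro rfl
    simp [polarDist]

lemma polarDist_triangle [PseudoMetricSpace X] {p q : X × ℝ} (r : X × ℝ) (hp : 1 ≤ p.2)
    (hq : 1 ≤ q.2) (hpq : dist p.1 q.1 ≤ 2) :
    polarDist p q ≤ polarDist p r + polarDist r q := by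
  obtain ⟨x, s⟩ := p
  obtain ⟨y, t⟩ := q
  obtain ⟨w, ρ⟩ := r
  simp only [polarDist]
  set M := max s t
  have hM : 1 ≤ M := le_max_of_le_left hp
  have hxy := dist_triangle x w y
  have hlog := abs_sub_le (Real.log t) (Real.log ρ) (Real.log s)
  rcases le_or_gt ρ M with hρ | hρ
  · have hxw : dist x w / M ≤ dist x w / max s ρ :=
      div_le_div_of_nonneg_left dist_nonneg (by positivity) (max_le (le_max_left _ _) hρ)
    have hwy : dist w y / M ≤ dist w y / max ρ t :=
      div_le_div_of_nonneg_left dist_nonneg (by positivity) (max_le hρ (le_max_right _ _))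
    have : dist x y / M ≤ dist x w / M + dist w y / M := by
      rw [← add_div]; gcongr
    linarith
  · have hρ₀ : 0 < ρ := by linarith
    rw [max_eq_right (le_of_max_le_left hρ.le), max_eq_left (le_of_max_le_right hρ.le)]
    have hslack := Real.abs_log_sub_add_two_mul_log_sub_log_max (by linarith : (0:ℝ) < s)
      (by linarith : (0:ℝ) < t) hρ.le
    have hcost : dist x y / M - dist x y / ρ ≤ 2 * (Real.log ρ - Real.log M) := calc
      dist x y / M - dist x y / ρ = dist x y * (M⁻¹ - ρ⁻¹) := by ring
      _ ≤ 2 * (M⁻¹ - ρ⁻¹) := by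
        gcongr
        rw [sub_nonneg]; exact inv_anti₀ (by positivity) hρ.le
      _ ≤ 2 * (Real.log ρ - Real.log M) := by
        gcongr 2 * ?_; exact Real.inv_sub_inv_le_log_sub_log hM hρ.le
    have : dist x y / ρ ≤ dist x w / ρ + dist w y / ρ := by
      rw [← add_div]; gcongr
    linarith

end PolarDist

namespace Complex

lemma norm_div_norm_sub_one {w : ℂ} (hw : w ≠ 0) :
    ‖w / ‖w‖ - 1‖ = 2 * Real.sin (|arg w| / 2) := by
  have hunit : w / ‖w‖ = exp (I * arg w) := by
    rw [div_eq_iff (by simpa using hw), mul_comm, mul_comm I, norm_mul_exp_arg_mul_I]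
  have hsin : |Real.sin (|arg w| / 2)| = |Real.sin (arg w / 2)| := by
    rcases abs_choice (arg w) with h | h <;> simp [h, neg_div, Real.sin_neg]
  have hnonneg : 0 ≤ Real.sin (|arg w| / 2) :=
    Real.sin_nonneg_of_nonneg_of_le_pi (by positivity) (by linarith [abs_arg_le_pi w, Real.pi_pos])
  rw [hunit, norm_exp_I_mul_ofReal_sub_one, Real.norm_eq_abs, abs_mul, abs_two, ← hsin,
    abs_of_nonneg hnonneg]

lemma dist_div_norm_eq {z₁ z₂ : ℂ} (h₁ : z₁ ≠ 0) (h₂ : z₂ ≠ 0) :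
    dist (z₁ / ‖z₁‖) (z₂ / ‖z₂‖) = 2 * Real.sin (|arg (z₂ / z₁)| / 2) := by
  have h₁' : (‖z₁‖ : ℂ) ≠ 0 := by simpa using h₁
  have h₂' : (‖z₂‖ : ℂ) ≠ 0 := by simpa using h₂
  have hfactor : z₂ / ‖z₂‖ - z₁ / ‖z₁‖ = z₁ / ‖z₁‖ * ((z₂ / z₁) / ‖z₂ / z₁‖ - 1) := by
    rw [norm_div]
    push_cast
    field_simp
  rw [dist_comm, dist_eq_norm, hfactor, norm_mul, ← norm_div_norm_sub_one (div_ne_zero h₂ h₁)]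
  simp [h₁]

lemma dist_div_norm_le_two (z₁ z₂ : ℂ) : dist (z₁ / ‖z₁‖) (z₂ / ‖z₂‖) ≤ 2 := by
  have hunit (z : ℂ) : ‖z / ‖z‖‖ ≤ 1 := by
    rcases eq_or_ne z 0 with rfl | hz
    · simp
    · simp [hz]
  linarith [dist_le_norm_add_norm (z₁ / ‖z₁‖) (z₂ / ‖z₂‖), hunit z₁, hunit z₂]

end Complex

noncomputable def polar (z : ℂ) : ℂ × ℝ := (z / ‖z‖, Real.log (1 / ‖z‖))

lemma D_eq_polarDist {z₁ z₂ : ℂ} (h₁ : z₁ ≠ 0) (h₂ : z₂ ≠ 0) :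
    D z₁ z₂ = polarDist (polar z₁) (polar z₂) := by
  rw [D, polarDist, polar, polar, Complex.dist_div_norm_eq h₁ h₂]

lemma polar_injOn : Set.InjOn polar {0}ᶜ := by
  intro z₁ h₁ z₂ h₂ h
  have hpos (z : ℂ) (hz : z ∈ ({0}ᶜ : Set ℂ)) : 0 < 1 / ‖z‖ := by
    simpa using hz
  obtain ⟨hu, hL⟩ := Prod.ext_iff.mp h
  have hnorm : ‖z₁‖ = ‖z₂‖ := by
    simpa using Real.log_injOn_pos (hpos z₁ h₁) (hpos z₂ h₂) hL
  rw [polar, polar, hnorm] at hu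
  exact (div_left_inj' (by simpa using h₂)).mp hu

lemma one_le_log_one_div_norm {z : ℂ} (h₀ : 0 < ‖z‖) (h₁ : ‖z‖ ≤ Real.exp (-1)) :
    1 ≤ Real.log (1 / ‖z‖) := by
  rw [one_div, Real.log_inv, le_neg, ← Real.log_exp (-1)]
  exact Real.log_le_log h₀ h₁

theorem stmt_1 :
    let E : Set ℂ := {z | 0 < ‖z‖ ∧ ‖z‖ ≤ Real.exp (-1)}
    (∀ z₁ ∈ E, ∀ z₂ ∈ E, D z₁ z₂ = D z₂ z₁) ∧
    (∀ z₁ ∈ E, ∀ z₂ ∈ E, 0 ≤ D z₁ z₂) ∧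
    (∀ z₁ ∈ E, ∀ z₂ ∈ E, (D z₁ z₂ = 0 ↔ z₁ = z₂)) ∧
    (∀ z₁ ∈ E, ∀ z₂ ∈ E, ∀ z₃ ∈ E, D z₁ z₂ ≤ D z₁ z₃ + D z₃ z₂) := by
  intro E
  have hne (z : ℂ) (hz : z ∈ E) : z ≠ 0 := norm_pos_iff.mp hz.1
  have hL (z : ℂ) (hz : z ∈ E) : 1 ≤ (polar z).2 := one_le_log_one_div_norm hz.1 hz.2
  have hD : ∀ z₁ ∈ E, ∀ z₂ ∈ E, D z₁ z₂ = polarDist (polar z₁) (polar z₂) :=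
    fun z₁ h₁ z₂ h₂ => D_eq_polarDist (hne z₁ h₁) (hne z₂ h₂)
  refine ⟨fun z₁ h₁ z₂ h₂ => ?_, fun z₁ h₁ z₂ h₂ => ?_, fun z₁ h₁ z₂ h₂ => ?_,
    fun z₁ h₁ z₂ h₂ z₃ h₃ => ?_⟩
  · rw [hD z₁ h₁ z₂ h₂, hD z₂ h₂ z₁ h₁, polarDist_comm]
  · rw [hD z₁ h₁ z₂ h₂]
    exact polarDist_nonneg (zero_le_one.trans (hL z₁ h₁))
  · rw [hD z₁ h₁ z₂ h₂, polarDist_eq_zero_iff (zero_lt_one.trans_le (hL z₁ h₁))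
      (zero_lt_one.trans_le (hL z₂ h₂))]
    exact polar_injOn.eq_iff (hne z₁ h₁) (hne z₂ h₂)
  · rw [hD z₁ h₁ z₂ h₂, hD z₁ h₁ z₃ h₃, hD z₃ h₃ z₂ h₂]
    exact polarDist_triangle _ (hL z₁ h₁) (hL z₂ h₂) (Complex.dist_div_norm_le_two z₁ z₂)
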